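/- arXiv:math/9912047 — 2 statements merged into one kernel-verified Lean document; each statement's English description precedes it below -/
import Mathlib

section
/- If G has α(G) > |V(G)|/2, then core(G) ≥ 1 (Hammer–Hansen–Simeone): there exists a vertex belonging to every maximum stable set of G. -/
open Finset

variable {V : Type*} [Fintype V] [DecidableEq V]

/-  A set of vertices is stable (independent) if no two of its vertices are adjacent. -/
def stable (G : SimpleGraph V) (S : Finset V) : Prop :=
  ∀ a ∈ S, ∀ b ∈ S, ¬ G.Adj a b

/-  The (open) neighborhood of a set of vertices. -/
open Classical in
noncomputable def nbhd (G : SimpleGraph V) (A : Finset V) : Finset V :=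
  Finset.univ.filter fun v => ∃ a ∈ A, G.Adj a v

/-  The stability number: maximum size of a stable set. -/
open Classical in
noncomputable def alpha (G : SimpleGraph V) : ℕ :=
  Finset.univ.sup fun S : Finset V => if stable G S then S.card else 0

/-  A maximum stable set. -/
def maxStable (G : SimpleGraph V) (S : Finset V) : Prop :=
  stable G S ∧ S.card = alpha G

/-  core(G): the intersection of all maximum stable sets. -/
open Classical in
noncomputable def core (G : SimpleGraph V) : Finset V :=
  Finset.univ.filter fun v => ∀ S : Finset V, maxStable G S → v ∈ S

/-  A vertex is isolated if it has no neighbors. -/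
def isolated (G : SimpleGraph V) (v : V) : Prop := ∀ w, ¬ G.Adj v w

/-  The set of isolated vertices. -/
open Classical in
noncomputable def isol (G : SimpleGraph V) : Finset V :=
  Finset.univ.filter fun v => isolated G v

/-! Let `𝓕` be a nonempty family of maximum stable sets, with intersection `I` and union `U`.
Then `|I| + |U| ≥ 2α`: adding a maximum stable set `S` to `𝓕` can lose at most
`|I \ S|` vertices of the intersection, and it gains at least that many in the union, since
the stable set `I \ S` may replace its neighbourhood in `S`, which lies outside `U`, without
the result outgrowing `α`. For the family of all maximum stable sets `|U| ≤ |V| < 2α`, so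
the intersection is nonempty. -/

omit [Fintype V] [DecidableEq V] in
lemma stable.mono {G : SimpleGraph V} {S T : Finset V} (hT : stable G T) (hST : S ⊆ T) :
    stable G S :=
  fun a ha b hb => hT a (hST ha) b (hST hb)

omit [DecidableEq V] in
lemma stable.card_le_alpha {G : SimpleGraph V} {S : Finset V} (hS : stable G S) :
    S.card ≤ alpha G := by
  classical
  simpa [alpha, hS] using Finset.le_sup (f := fun T : Finset V => if stable G T then T.card else 0)
    (Finset.mem_univ S)

omit [DecidableEq V] in
lemma exists_maxStable (G : SimpleGraph V) : ∃ S, maxStable G S := by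
  classical
  obtain ⟨S, -, hS⟩ := Finset.exists_mem_eq_sup Finset.univ Finset.univ_nonempty
    fun T : Finset V => if stable G T then T.card else 0
  by_cases hstable : stable G S
  · exact ⟨S, hstable, by rw [alpha, hS, if_pos hstable]⟩
  · refine ⟨∅, fun _ h => absurd h (Finset.notMem_empty _), ?_⟩
    rw [alpha, hS, if_neg hstable, Finset.card_empty]

lemma stable_union_sdiff_nbhd {G : SimpleGraph V} {S X : Finset V} (hS : stable G S)
    (hX : stable G X) : stable G ((S \ nbhd G X) ∪ X) := by
  classical
  have hnot : ∀ {s x}, s ∈ S \ nbhd G X → x ∈ X → ¬ G.Adj x s := fun hs hx hadj =>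
    (Finset.mem_sdiff.1 hs).2 (Finset.mem_filter.2 ⟨Finset.mem_univ _, _, hx, hadj⟩)
  intro a ha b hb
  rcases Finset.mem_union.1 ha with ha | ha <;> rcases Finset.mem_union.1 hb with hb | hb
  · exact hS a (Finset.mem_sdiff.1 ha).1 b (Finset.mem_sdiff.1 hb).1
  · exact fun hab => hnot ha hb hab.symm
  · exact hnot hb ha
  · exact hX a ha b hb

lemma maxStable.card_le_card_inter_nbhd {G : SimpleGraph V} {S X : Finset V}
    (hS : maxStable G S) (hX : stable G X) (hXS : Disjoint X S) :
    X.card ≤ (S ∩ nbhd G X).card := by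
  have hle := (stable_union_sdiff_nbhd hS.1 hX).card_le_alpha
  rw [Finset.card_union_of_disjoint (hXS.symm.mono_left Finset.sdiff_subset),
    Finset.card_sdiff, ← hS.2, Finset.inter_comm] at hle
  have := Finset.card_le_card (Finset.inter_subset_left (s₁ := S) (s₂ := nbhd G X))
  omega

lemma maxStable.card_sdiff_le_card_sdiff {G : SimpleGraph V} {S I U : Finset V}
    (hS : maxStable G S) (hI : stable G I) (hIU : ∀ x ∈ I, ∀ u ∈ U, ¬ G.Adj x u) :
    (I \ S).card ≤ (S \ U).card := by
  classical
  refine (hS.card_le_card_inter_nbhd (hI.mono Finset.sdiff_subset) Finset.sdiff_disjoint).trans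
    (Finset.card_le_card fun s hs => ?_)
  obtain ⟨hsS, hsN⟩ := Finset.mem_inter.1 hs
  obtain ⟨-, x, hx, hadj⟩ := Finset.mem_filter.1 hsN
  exact Finset.mem_sdiff.2 ⟨hsS, fun hsU => hIU x (Finset.mem_sdiff.1 hx).1 s hsU hadj⟩

lemma two_mul_alpha_le_card_inf_add_card_sup {G : SimpleGraph V} {𝓕 : Finset (Finset V)}
    (h𝓕 : 𝓕.Nonempty) (hmax : ∀ S ∈ 𝓕, maxStable G S) :
    2 * alpha G ≤ (𝓕.inf id).card + (𝓕.sup id).card := by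
  induction h𝓕 using Finset.Nonempty.cons_induction with
  | singleton S =>
    have hS := hmax S (Finset.mem_singleton_self S)
    simp only [Finset.inf_singleton, Finset.sup_singleton, id_eq, hS.2]
    omega
  | cons S 𝓕 _ h𝓕 ih =>
    obtain ⟨T, hT⟩ := h𝓕
    have hmax' := fun R hR => hmax R (Finset.mem_cons_of_mem hR)
    have hinf_sub : 𝓕.inf id ⊆ T := Finset.inf_le (f := id) hT
    have hIU : ∀ x ∈ 𝓕.inf id, ∀ u ∈ 𝓕.sup id, ¬ G.Adj x u := fun x hx u hu => by
      obtain ⟨R, hR, huR⟩ := Finset.mem_sup.1 hu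
      exact (hmax' R hR).1 x (Finset.inf_le (f := id) hR hx) u huR
    have hstep := (hmax S (Finset.mem_cons_self S 𝓕)).card_sdiff_le_card_sdiff
      ((hmax' T hT).1.mono hinf_sub) hIU
    have := ih hmax'
    have := Finset.card_inter_add_card_sdiff (𝓕.inf id) S
    have := Finset.card_sdiff_add_card S (𝓕.sup id)
    rw [Finset.inf_cons, Finset.sup_cons, id_eq, Finset.inf_eq_inter, Finset.inter_comm,
      Finset.sup_eq_union]
    omega

theorem stmt9 (G : SimpleGraph V) (h1 : Fintype.card V < 2 * alpha G) :
    ∃ v : V, ∀ S : Finset V, maxStable G S → v ∈ S := by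
  classical
  set 𝓕 := Finset.univ.filter (maxStable G)
  have hmem : ∀ {S}, S ∈ 𝓕 ↔ maxStable G S := by simp [𝓕]
  obtain ⟨S, hS⟩ := exists_maxStable G
  have hbound := two_mul_alpha_le_card_inf_add_card_sup ⟨S, hmem.2 hS⟩ fun _ => hmem.1
  have := Finset.card_le_univ (𝓕.sup id)
  obtain ⟨v, hv⟩ := Finset.card_pos.1 (show 0 < (𝓕.inf id).card by omega)
  exact ⟨v, fun T hT => Finset.inf_le (f := id) (hmem.2 hT) hv⟩
end

section
/- For every maximum stable set S of a graph G, |S - core(G)| ≤ |N(S) - N(core(G))|. -/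
open Finset

variable {V : Type*} [Fintype V] [DecidableEq V]

/-  For every maximum stable set S of G, |S - core(G)| ≤ |N(S) - N(core(G))|. -/
lemma mem_nbhd {G : SimpleGraph V} {A : Finset V} {v : V} :
    v ∈ nbhd G A ↔ ∃ a ∈ A, G.Adj a v := by
  simp [nbhd]

lemma nbhd_mono {G : SimpleGraph V} {A B : Finset V} (h : A ⊆ B) :
    nbhd G A ⊆ nbhd G B := by
  intro v hv
  rw [mem_nbhd] at *
  obtain ⟨a, ha, hadj⟩ := hv
  exact ⟨a, h ha, hadj⟩

lemma stable_card_le (G : SimpleGraph V) (Y : Finset V) (hY : stable G Y) :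
    Y.card ≤ alpha G := by
  classical
  have h := Finset.le_sup (f := fun S : Finset V => if stable G S then S.card else 0)
    (Finset.mem_univ Y)
  simpa [hY, alpha] using h

lemma lemA (G : SimpleGraph V) (T Y : Finset V) (hT : maxStable G T)
    (hY : stable G Y) (hd : ∀ y ∈ Y, y ∉ T) :
    Y.card ≤ (nbhd G Y ∩ T).card := by
  classical
  set T' := (T \ nbhd G Y) ∪ Y with hT'
  have hstab : stable G T' := by
    intro a ha b hb hab
    simp only [hT', mem_union, mem_sdiff] at ha hb
    rcases ha with ⟨haT, haN⟩ | haY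
    · rcases hb with ⟨hbT, _⟩ | hbY
      · exact hT.1 a haT b hbT hab
      · exact haN (mem_nbhd.mpr ⟨b, hbY, hab.symm⟩)
    · rcases hb with ⟨hbT, hbN⟩ | hbY
      · exact hbN (mem_nbhd.mpr ⟨a, haY, hab⟩)
      · exact hY a haY b hbY hab
  have hdisj : Disjoint (T \ nbhd G Y) Y := by
    rw [Finset.disjoint_right]
    intro y hy hy'
    exact hd y hy (mem_sdiff.mp hy').1
  have hcard : T'.card = (T \ nbhd G Y).card + Y.card := card_union_of_disjoint hdisj
  have h1 : (T \ nbhd G Y).card + (T ∩ nbhd G Y).card = T.card := by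
    exact Finset.card_sdiff_add_card_inter T (nbhd G Y)
  have h2 : T'.card ≤ alpha G := stable_card_le G T' hstab
  have h3 : T.card = alpha G := hT.2
  rw [Finset.inter_comm]
  omega

lemma core_subset {G : SimpleGraph V} {T : Finset V} (hT : maxStable G T) :
    core G ⊆ T := by
  intro v hv
  classical
  simp only [core, Finset.mem_filter] at hv
  exact hv.2 T hT

lemma step (G : SimpleGraph V) (S I T : Finset V) (hS : maxStable G S)
    (hT : maxStable G T) (hIS : I ⊆ S)
    (h : (S \ I).card ≤ (nbhd G S \ nbhd G I).card) :
    (S \ (I ∩ T)).card ≤ (nbhd G S \ nbhd G (I ∩ T)).card := by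
  classical
  set Y := I \ T with hYdef
  have hYS : Y ⊆ S := (Finset.sdiff_subset).trans hIS
  have hYstab : stable G Y := fun a ha b hb => hS.1 a (hYS ha) b (hYS hb)
  have hYd : ∀ y ∈ Y, y ∉ T := fun y hy => (Finset.mem_sdiff.mp hy).2
  have hB : Y.card ≤ (nbhd G Y ∩ T).card := lemA G T Y hT hYstab hYd
  set A := nbhd G S \ nbhd G I with hA
  set B := nbhd G Y ∩ T with hBdef
  have hBsub : B ⊆ nbhd G I := by
    intro x hx
    exact nbhd_mono (Finset.sdiff_subset) (Finset.mem_inter.mp hx).1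
  have hABdisj : Disjoint A B := by
    rw [Finset.disjoint_left]
    intro x hx hx'
    exact (Finset.mem_sdiff.mp hx).2 (hBsub hx')
  have hABsub : A ∪ B ⊆ nbhd G S \ nbhd G (I ∩ T) := by
    intro x hx
    rw [Finset.mem_union] at hx
    rw [Finset.mem_sdiff]
    rcases hx with hx | hx
    · rw [Finset.mem_sdiff] at hx
      exact ⟨hx.1, fun hc => hx.2 (nbhd_mono Finset.inter_subset_left hc)⟩
    · rw [Finset.mem_inter] at hx
      refine ⟨nbhd_mono hYS hx.1, ?_⟩
      intro hc
      obtain ⟨a, ha, hadj⟩ := mem_nbhd.mp hc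
      exact hT.1 a (Finset.mem_inter.mp ha).2 x hx.2 hadj
  have e1 : S \ (I ∩ T) = (S \ I) ∪ Y := by
    ext x
    simp only [Finset.mem_sdiff, Finset.mem_inter, Finset.mem_union, not_and, hYdef]
    constructor
    · rintro ⟨hxS, hx⟩
      by_cases hxI : x ∈ I
      · exact Or.inr ⟨hxI, hx hxI⟩
      · exact Or.inl ⟨hxS, hxI⟩
    · rintro (⟨hxS, hxI⟩ | ⟨hxI, hxT⟩)
      · exact ⟨hxS, fun hc => absurd hc hxI⟩
      · exact ⟨hIS hxI, fun _ => hxT⟩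
  have e1disj : Disjoint (S \ I) Y := by
    rw [Finset.disjoint_left]
    intro x hx hx'
    exact (Finset.mem_sdiff.mp hx).2 (Finset.mem_sdiff.mp hx').1
  calc (S \ (I ∩ T)).card = (S \ I).card + Y.card := by
        rw [e1, Finset.card_union_of_disjoint e1disj]
    _ ≤ A.card + B.card := Nat.add_le_add h hB
    _ = (A ∪ B).card := (Finset.card_union_of_disjoint hABdisj).symm
    _ ≤ (nbhd G S \ nbhd G (I ∩ T)).card := Finset.card_le_card hABsub

lemma main_aux (G : SimpleGraph V) (S : Finset V) (hS : maxStable G S) :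
    ∀ n (I : Finset V), I.card ≤ n → core G ⊆ I → I ⊆ S →
      (S \ I).card ≤ (nbhd G S \ nbhd G I).card →
      (S \ core G).card ≤ (nbhd G S \ nbhd G (core G)).card := by
  classical
  intro n
  induction n with
  | zero =>
    intro I hI hcI hIS h
    have : I = ∅ := Finset.card_eq_zero.mp (Nat.le_zero.mp hI)
    have hc : core G = I := Finset.subset_empty.mp (this ▸ hcI) ▸ this.symm ▸ rfl
    rwa [hc]
  | succ n ih =>
    intro I hI hcI hIS h
    by_cases hIc : core G = I
    · rwa [hIc]
    · have : ∃ v ∈ I, v ∉ core G := by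
        by_contra hc
        push_neg at hc
        exact hIc (Finset.Subset.antisymm hcI hc)
      obtain ⟨v, hvI, hvc⟩ := this
      have : ∃ T : Finset V, maxStable G T ∧ v ∉ T := by
        by_contra hc
        push_neg at hc
        simp only [core, Finset.mem_filter] at hvc
        exact hvc ⟨Finset.mem_univ v, hc⟩
      obtain ⟨T, hT, hvT⟩ := this
      have hstep := step G S I T hS hT hIS h
      have hsub : I ∩ T ⊆ I := Finset.inter_subset_left
      have hlt : (I ∩ T).card < I.card := by
        apply Finset.card_lt_card
        rw [Finset.ssubset_iff_of_subset hsub]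
        exact ⟨v, hvI, fun hc => hvT (Finset.mem_inter.mp hc).2⟩
      exact ih (I ∩ T) (by omega) (Finset.subset_inter hcI (core_subset hT))
        (hsub.trans hIS) hstep

theorem stmt14 (G : SimpleGraph V) (S : Finset V) (hS : maxStable G S) :
    (S \ core G).card ≤ (nbhd G S \ nbhd G (core G)).card := by
  apply main_aux G S hS S.card S (le_refl _) (core_subset hS) (Finset.Subset.refl S)
  simp
end
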